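/- For every element g of B₃ and all integers j and k, the element a₃⁻¹·a₁ʲ·a₂ᵏ·g is conjugate in B₃ to the element a₁⁻¹·a₂^{k-1}·g·a₂^{j+1}. -/
import Mathlib


/-- The braid relation σ₁σ₂σ₁ = σ₂σ₁σ₂ as a relator in the free group on two generators. -/
def braidRel : Set (FreeGroup (Fin 2)) :=
  {FreeGroup.of 0 * FreeGroup.of 1 * FreeGroup.of 0 *
    (FreeGroup.of 1 * FreeGroup.of 0 * FreeGroup.of 1)⁻¹}

/-- The braid group on three strands, presented as ⟨σ₁, σ₂ | σ₁σ₂σ₁ = σ₂σ₁σ₂⟩. -/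
abbrev B₃ : Type := PresentedGroup braidRel

/-- The first standard generator σ₁ of B₃. -/
def σ₁ : B₃ := PresentedGroup.of 0

/-- The second standard generator σ₂ of B₃. -/
def σ₂ : B₃ := PresentedGroup.of 1

def a₁ : B₃ := σ₁
def a₂ : B₃ := σ₂
def a₃ : B₃ := σ₁⁻¹ * σ₂ * σ₁

lemma braid_rel' : σ₁ * σ₂ * σ₁ = σ₂ * σ₁ * σ₂ := by
  have h : (QuotientGroup.mk (FreeGroup.of 0 * FreeGroup.of 1 * FreeGroup.of 0 *
      (FreeGroup.of 1 * FreeGroup.of 0 * FreeGroup.of 1)⁻¹ : FreeGroup (Fin 2)) : B₃) = 1 := by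
    apply (QuotientGroup.eq_one_iff _).mpr
    exact Subgroup.subset_normalClosure (by simp [braidRel])
  have h2 : σ₁ * σ₂ * σ₁ * (σ₂ * σ₁ * σ₂)⁻¹ = 1 := h
  exact mul_inv_eq_one.mp h2

lemma conj_zpow_braid (n : ℤ) : σ₂⁻¹ * σ₁ ^ n * σ₂ = σ₁ * σ₂ ^ n * σ₁⁻¹ := by
  have h1 : σ₂⁻¹ * σ₁ * σ₂ = σ₁ * σ₂ * σ₁⁻¹ := by
    rw [show σ₂⁻¹ * σ₁ * σ₂ = σ₂⁻¹ * (σ₁ * σ₂ * σ₁) * σ₁⁻¹ by group, braid_rel']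
    group
  calc σ₂⁻¹ * σ₁ ^ n * σ₂ = (σ₂⁻¹ * σ₁ * σ₂⁻¹⁻¹) ^ n := by rw [conj_zpow]; group
    _ = (σ₁ * σ₂ * σ₁⁻¹) ^ n := by rw [inv_inv, h1]
    _ = σ₁ * σ₂ ^ n * σ₁⁻¹ := conj_zpow

/-- For every g ∈ B₃ and integers j, k, the element a₃⁻¹·a₁ʲ·a₂ᵏ·g is conjugate to
a₁⁻¹·a₂^(k-1)·g·a₂^(j+1). -/
theorem conj_a₃_inv_a₁_a₂ (g : B₃) (j k : ℤ) :
    IsConj (a₃⁻¹ * a₁ ^ j * a₂ ^ k * g) (a₁⁻¹ * a₂ ^ (k - 1) * g * a₂ ^ (j + 1)) := by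
  rw [isConj_iff]
  refine ⟨σ₁⁻¹ * σ₂ ^ (k - 1) * g, ?_⟩
  have key := conj_zpow_braid (j + 1)
  simp only [a₁, a₂, a₃]
  calc (σ₁⁻¹ * σ₂ ^ (k - 1) * g) * ((σ₁⁻¹ * σ₂ * σ₁)⁻¹ * σ₁ ^ j * σ₂ ^ k * g) *
        (σ₁⁻¹ * σ₂ ^ (k - 1) * g)⁻¹
      = σ₁⁻¹ * σ₂ ^ (k - 1) * g * σ₁⁻¹ * (σ₂⁻¹ * σ₁ ^ (j + 1) * σ₂) * σ₁ := by group
    _ = σ₁⁻¹ * σ₂ ^ (k - 1) * g * σ₁⁻¹ * (σ₁ * σ₂ ^ (j + 1) * σ₁⁻¹) * σ₁ := by rw [key]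
    _ = σ₁⁻¹ * σ₂ ^ (k - 1) * g * σ₂ ^ (j + 1) := by group
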